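/- arXiv:2404.12648 — 6 statements merged into one kernel-verified Lean document; each statement's English description precedes it below -/
import Mathlib

section
/- For any sequence of positive reals $x_1, \dots, x_n$, it holds that $\frac{\sum_{i=1}^n x_i}{\sqrt{\sum_{i=1}^n i x_i^2}} \leq \sqrt{1 + \log n}$. -/
/-! Cauchy–Schwarz with the weights `1/i` and `i xᵢ²` gives `(∑ xᵢ)² ≤ Hₙ ∑ i xᵢ²`,
and the harmonic number satisfies `Hₙ ≤ 1 + log n`. -/

open Finset Real

theorem Finset.sq_sum_le_sum_inv_mul_sum_mul_sq {ι R : Type*} [Field R] [LinearOrder R]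
    [IsStrictOrderedRing R] (s : Finset ι) (w x : ι → R) (hw : ∀ i ∈ s, 0 < w i) :
    (∑ i ∈ s, x i) ^ 2 ≤ (∑ i ∈ s, (w i)⁻¹) * ∑ i ∈ s, w i * x i ^ 2 :=
  sum_sq_le_sum_mul_sum_of_sq_le_mul s (fun i hi => (inv_pos.2 (hw i hi)).le)
    (fun i hi => mul_nonneg (hw i hi).le (sq_nonneg _))
    (fun i hi => by rw [inv_mul_cancel_left₀ (hw i hi).ne'])

theorem sum_fin_inv_succ_le_one_add_log (n : ℕ) :
    ∑ i : Fin n, ((i : ℕ) + 1 : ℝ)⁻¹ ≤ 1 + log n := by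
  have h := harmonic_le_one_add_log n
  rw [harmonic, ← Fin.sum_univ_eq_sum_range] at h
  push_cast at h
  exact h

theorem Real.div_sqrt_le_sqrt_of_sq_le_mul {a b c : ℝ} (h : a ^ 2 ≤ c * b) : a / √b ≤ √c := by
  rcases le_or_gt b 0 with hb | hb
  · rw [sqrt_eq_zero'.2 hb, div_zero]
    exact sqrt_nonneg c
  · rw [div_le_iff₀ (sqrt_pos.2 hb), ← sqrt_mul' c hb.le]
    exact (le_abs_self a).trans (abs_le_sqrt h)

theorem stmt_0_general (n : ℕ) (x : Fin n → ℝ) :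
    (∑ i : Fin n, x i) / Real.sqrt (∑ i : Fin n, ((i : ℕ) + 1 : ℝ) * x i ^ 2) ≤
      Real.sqrt (1 + Real.log n) :=
  div_sqrt_le_sqrt_of_sq_le_mul <|
    (sq_sum_le_sum_inv_mul_sum_mul_sq univ (fun i : Fin n => ((i : ℕ) + 1 : ℝ)) x
      fun _ _ => by positivity).trans <|
    mul_le_mul_of_nonneg_right (sum_fin_inv_succ_le_one_add_log n)
      (sum_nonneg fun _ _ => by positivity)

/-- For any sequence of positive reals `x₁, …, xₙ`,
`(∑ i, xᵢ) / √(∑ i, i * xᵢ²) ≤ √(1 + log n)`. -/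
theorem stmt_0 (n : ℕ) (hn : 1 ≤ n) (x : Fin n → ℝ) (hx : ∀ i, 0 < x i) :
    (∑ i : Fin n, x i) / Real.sqrt (∑ i : Fin n, ((i : ℕ) + 1 : ℝ) * x i ^ 2) ≤
      Real.sqrt (1 + Real.log n) :=
  stmt_0_general n x
end

section
/- Let $\{x_i\}_{i=1}^{t}$ be vectors in $\mathbb{R}^d$, let $\Lambda_0$ be a positive definite $d \times d$ matrix, and define $\Lambda_i = \Lambda_0 + \sum_{j=1}^{i-1} x_j x_j^\top$. Then $\sum_{i=1}^t \min\{\|x_i\|_{\Lambda_i^{-1}}^2, 1\} \leq 2 \log\left(\frac{\det \Lambda_{t+1}}{\det \Lambda_0}\right)$. -/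
/-!
Each rank-one update multiplies the determinant by `1 + ‖xᵢ‖²_{Λᵢ⁻¹}` (matrix determinant
lemma), so `log (det Λₜ / det Λ₀) = ∑ log (1 + ‖xᵢ‖²_{Λᵢ⁻¹})`, and termwise
`min u 1 ≤ 2 log (1 + u)` for `u ≥ 0`.
-/

open Matrix Finset

theorem Matrix.det_add_vecMulVec {n α : Type*} [Fintype n] [DecidableEq n] [CommRing α]
    {A : Matrix n n α} (hA : IsUnit A.det) (u v : n → α) :
    (A + vecMulVec u v).det = A.det * (1 + v ⬝ᵥ (A⁻¹ *ᵥ u)) := by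
  have hfactor : A + vecMulVec u v = A * (1 + vecMulVec (A⁻¹ *ᵥ u) v) := by
    rw [Matrix.mul_add, Matrix.mul_one, vecMulVec_eq Unit, vecMulVec_eq Unit,
      replicateCol_mulVec, ← Matrix.mul_assoc, ← Matrix.mul_assoc, mul_nonsing_inv _ hA,
      Matrix.one_mul]
  rw [hfactor, det_mul, vecMulVec_eq Unit, det_one_add_replicateCol_mul_replicateRow]

theorem Real.min_one_le_two_mul_log_one_add {u : ℝ} (hu : 0 ≤ u) :
    min u 1 ≤ 2 * Real.log (1 + u) := by
  have hpos : 0 < 1 + u := by linarith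
  calc min u 1 ≤ 2 * u / (1 + u) := by
        rw [le_div_iff₀ hpos]
        rcases le_total u 1 with h | h
        · rw [min_eq_left h]; nlinarith
        · rw [min_eq_right h]; linarith
    _ = 2 * (1 - (1 + u)⁻¹) := by field_simp; ring
    _ ≤ 2 * Real.log (1 + u) := by gcongr; exact Real.one_sub_inv_le_log_of_pos hpos

/-- Elliptical potential lemma: with `Λ i = Λ₀ + ∑_{j < i} x j x jᵀ` (so `Λ 0 = Λ₀`),
`∑_{i < t} min ‖x i‖²_{(Λ i)⁻¹} 1 ≤ 2 log (det (Λ t) / det Λ₀)`. -/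
theorem stmt_3 (d t : ℕ) (x : ℕ → Fin d → ℝ)
    (Λ₀ : Matrix (Fin d) (Fin d) ℝ) (hΛ₀ : Λ₀.PosDef)
    (Λ : ℕ → Matrix (Fin d) (Fin d) ℝ)
    (hΛ : ∀ i, Λ i = Λ₀ + ∑ j ∈ Finset.range i, Matrix.vecMulVec (x j) (x j)) :
    ∑ i ∈ Finset.range t, min (x i ⬝ᵥ ((Λ i)⁻¹ *ᵥ x i)) 1 ≤
      2 * Real.log ((Λ t).det / Λ₀.det) := by
  set u : ℕ → ℝ := fun i => x i ⬝ᵥ ((Λ i)⁻¹ *ᵥ x i)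
  have hstep (i : ℕ) : Λ (i + 1) = Λ i + vecMulVec (x i) (x i) := by
    rw [hΛ, hΛ, sum_range_succ, add_assoc]
  have hPD (i : ℕ) : (Λ i).PosDef := by
    rw [hΛ]
    exact hΛ₀.add_posSemidef <| posSemidef_sum _ fun j _ => by
      simpa using posSemidef_vecMulVec_self_star (x j)
  have hu (i : ℕ) : 0 ≤ u i := by
    simpa using (hPD i).inv.posSemidef.dotProduct_mulVec_nonneg (x i)
  have hdet : ∀ s, (Λ s).det = Λ₀.det * ∏ i ∈ range s, (1 + u i) := by
    intro s
    induction s with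
    | zero => simp [hΛ 0]
    | succ s ih =>
      rw [hstep, det_add_vecMulVec (hPD s).det_pos.ne'.isUnit, ih, prod_range_succ, mul_assoc]
  rw [hdet, mul_div_cancel_left₀ _ hΛ₀.det_pos.ne',
    Real.log_prod fun i _ => by linarith [hu i], mul_sum]
  exact sum_le_sum fun i _ => Real.min_one_le_two_mul_log_one_add (hu i)
end

section
/- Let $\phi: \mathcal{S} \times \mathcal{A} \to \mathbb{R}^d$ be a feature mapping whose image spans $\mathbb{R}^d$. Then there exists an invertible linear transformation $A \in \mathbb{R}^{d \times d}$ such that for any bounded function $f: \mathcal{S} \times \mathcal{A} \to \mathbb{R}$ and vector $z \in \mathbb{R}^d$ satisfying $f(s,a) = \phi(s,a)^\top z$ for all $(s,a)$, one has $\|A \phi(s,a)\|_2 \leq 1$ for all $(s,a)$ and $\|A^{-1} z\|_2 \leq \sup_{s,a}|f(s,a)| \cdot \sqrt{d}$. -/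
/-!
Let `M` maximize `det` over the closed convex hull of the outer products `φ p φ pᵀ`; the hull is
compact because `φ` is bounded, and contains a positive definite matrix because `φ` spans.
Moving from `M` towards `φ p φ pᵀ` cannot increase `det`, and the first-order term of that
variation is `tr (M⁻¹ φ p φ pᵀ) - d`, whence `φ pᵀ M⁻¹ φ p ≤ d` (Kiefer–Wolfowitz).
For `A = d^(-1/2) M^(-1/2)` this reads `‖A φ p‖ ≤ 1`, while `‖A⁻¹ z‖² = d zᵀ M z`, and the linear
functional `N ↦ zᵀ N z` is bounded by `sup |f|²` on every `φ p φ pᵀ`, hence on the hull.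
-/

open Matrix

noncomputable def eNorm {d : ℕ} (v : Fin d → ℝ) : ℝ := Real.sqrt (∑ i, v i ^ 2)

open Set

section EuclideanNorm

variable {d : ℕ}

lemma eNorm_eq_norm (v : Fin d → ℝ) : eNorm v = ‖(WithLp.toLp 2 v : EuclideanSpace ℝ (Fin d))‖ := by
  simp [eNorm, EuclideanSpace.norm_eq]

lemma eNorm_nonneg (v : Fin d → ℝ) : 0 ≤ eNorm v :=
  Real.sqrt_nonneg _

lemma norm_le_eNorm (v : Fin d → ℝ) : ‖v‖ ≤ eNorm v := by
  rw [eNorm_eq_norm]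
  exact (pi_norm_le_iff_of_nonneg (norm_nonneg _)).2 fun i =>
    PiLp.norm_apply_le (WithLp.toLp 2 v : EuclideanSpace ℝ (Fin d)) i

lemma abs_dotProduct_le_eNorm_mul_eNorm (v w : Fin d → ℝ) : |v ⬝ᵥ w| ≤ eNorm v * eNorm w := by
  rw [eNorm_eq_norm, eNorm_eq_norm]
  simpa [EuclideanSpace.inner_eq_star_dotProduct, dotProduct_comm] using
    abs_real_inner_le_norm (WithLp.toLp 2 v : EuclideanSpace ℝ (Fin d)) (WithLp.toLp 2 w)

lemma eNorm_smul (c : ℝ) (v : Fin d → ℝ) : eNorm (c • v) = |c| * eNorm v := by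
  rw [eNorm_eq_norm, eNorm_eq_norm, WithLp.toLp_smul, norm_smul, Real.norm_eq_abs]

lemma eNorm_mulVec_sq (B : Matrix (Fin d) (Fin d) ℝ) (v : Fin d → ℝ) :
    eNorm (B *ᵥ v) ^ 2 = v ⬝ᵥ (Bᵀ * B) *ᵥ v := by
  rw [eNorm, Real.sq_sqrt (by positivity), ← mulVec_mulVec, dotProduct_mulVec, vecMul_transpose]
  simp [dotProduct, sq]

open scoped MatrixOrder in
lemma eNorm_sqrt_mulVec_sq {M : Matrix (Fin d) (Fin d) ℝ} (hM : M.PosSemidef) (v : Fin d → ℝ) :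
    eNorm (CFC.sqrt M *ᵥ v) ^ 2 = v ⬝ᵥ M *ᵥ v := by
  rw [eNorm_mulVec_sq, ← conjTranspose_eq_transpose_of_trivial,
    (CFC.sqrt_nonneg M).posSemidef.isHermitian.eq, CFC.sqrt_mul_sqrt_self M hM.nonneg]

end EuclideanNorm

namespace Matrix

variable {n : Type*}

lemma convex_setOf_posSemidef : Convex ℝ {N : Matrix n n ℝ | N.PosSemidef} :=
  fun _ hA _ hB _ _ ha hb _ => (hA.smul ha).add (hB.smul hb)

variable [Fintype n]

lemma dotProduct_vecMulVec_self_mulVec (v z : n → ℝ) :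
    z ⬝ᵥ vecMulVec v v *ᵥ z = (v ⬝ᵥ z) ^ 2 := by
  rw [vecMulVec_mulVec, op_smul_eq_smul, dotProduct_smul, smul_eq_mul,
    dotProduct_comm, sq]

lemma isClosed_setOf_posSemidef : IsClosed {N : Matrix n n ℝ | N.PosSemidef} := by
  simp_rw [posSemidef_iff_dotProduct_mulVec, ofPred_and, ofPred_forall]
  exact (isClosed_eq continuous_id.matrix_conjTranspose continuous_id).inter
    (isClosed_iInter fun x => isClosed_le continuous_const
      (continuous_const.dotProduct (continuous_id.matrix_mulVec continuous_const)))

lemma posDef_sum_vecMulVec_self {s : Finset (n → ℝ)}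
    (hs : Submodule.span ℝ (s : Set (n → ℝ)) = ⊤) : (∑ v ∈ s, vecMulVec v v).PosDef := by
  have hpsd : (∑ v ∈ s, vecMulVec v v).PosSemidef :=
    posSemidef_sum s fun v _ => by simpa using posSemidef_vecMulVec_self_star v
  refine .of_dotProduct_mulVec_pos hpsd.isHermitian fun x hx => ?_
  rw [star_trivial, sum_mulVec, dotProduct_sum]
  simp_rw [dotProduct_vecMulVec_self_mulVec]
  refine (Finset.sum_nonneg fun v _ => sq_nonneg _).lt_of_ne fun h => hx ?_
  have horth : ∀ v ∈ s, v ⬝ᵥ x = 0 := fun v hv =>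
    pow_eq_zero_iff two_ne_zero |>.1 <|
      (Finset.sum_eq_zero_iff_of_nonneg fun v _ => sq_nonneg (v ⬝ᵥ x)).1 h.symm v hv
  obtain ⟨c, -, hc⟩ := Submodule.mem_span_finset.1 (hs ▸ Submodule.mem_top : x ∈ _)
  rw [← dotProduct_self_eq_zero]
  calc x ⬝ᵥ x = (∑ v ∈ s, c v • v) ⬝ᵥ x := by rw [hc]
    _ = 0 := by
      simp only [sum_dotProduct, smul_dotProduct, smul_eq_mul]
      exact Finset.sum_eq_zero fun v hv => by rw [horth v hv, mul_zero]

variable [DecidableEq n]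

lemma trace_nonpos_of_det_one_add_smul_le_one (B : Matrix n n ℝ)
    (h : ∀ t ∈ Ioc (0 : ℝ) 1, (1 + t • B).det ≤ 1) : B.trace ≤ 0 := by
  -- `det (1 + t • B) = 1 + t * tr B + t ^ 2 * E(t)` for a polynomial `E`
  set E := (det (1 + (Polynomial.X : Polynomial ℝ) • B.map Polynomial.C)).divX.divX
  have hle : ∀ t ∈ Ioc (0 : ℝ) 1, B.trace ≤ -(E.eval t * t) := by
    intro t ht
    have := h t ht
    rw [det_one_add_smul] at this
    nlinarith [ht.1]
  have hlim : Filter.Tendsto (fun t => -(E.eval t * t)) (nhdsWithin 0 (Ioi 0)) (nhds 0) := by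
    have hcont : Continuous fun t => -(E.eval t * t) := by fun_prop
    simpa using (hcont.tendsto 0).mono_left nhdsWithin_le_nhds
  exact ge_of_tendsto hlim (Filter.eventually_of_mem (Ioc_mem_nhdsGT one_pos) hle)

theorem trace_inv_mul_le_card_of_isMaxOn_det {K : Set (Matrix n n ℝ)} {M N : Matrix n n ℝ}
    (hK : Convex ℝ K) (hM : M ∈ K) (hmax : IsMaxOn det K M) (hdet : 0 < M.det) (hN : N ∈ K) :
    (M⁻¹ * N).trace ≤ Fintype.card n := by
  have hunit : IsUnit M.det := hdet.ne'.isUnit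
  have hB := trace_nonpos_of_det_one_add_smul_le_one (M⁻¹ * (N - M)) fun t ht => by
    have hfac : M + t • (N - M) = M * (1 + t • (M⁻¹ * (N - M))) := by
      rw [mul_add, mul_one, Matrix.mul_smul, mul_nonsing_inv_cancel_left _ _ hunit]
    have hmem : (M + t • (N - M)).det ≤ M.det := hmax (hK.add_smul_sub_mem hM hN ⟨ht.1.le, ht.2⟩)
    rw [hfac, det_mul] at hmem
    exact le_of_mul_le_mul_left (by rwa [mul_one]) hdet
  rwa [mul_sub, trace_sub, nonsing_inv_mul _ hunit, trace_one, sub_nonpos] at hB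

end Matrix

open Matrix

section OuterProductHull

variable {X n : Type*} [Fintype n]

def outerProductHull (φ : X → n → ℝ) : Set (Matrix n n ℝ) :=
  closedConvexHull ℝ (range fun p => vecMulVec (φ p) (φ p))

variable {φ : X → n → ℝ}

lemma posSemidef_of_mem_outerProductHull {N : Matrix n n ℝ} (hN : N ∈ outerProductHull φ) :
    N.PosSemidef :=
  closedConvexHull_min (by rintro _ ⟨p, rfl⟩; simpa using posSemidef_vecMulVec_self_star (φ p))
    convex_setOf_posSemidef isClosed_setOf_posSemidef hN

lemma dotProduct_mulVec_le_sq_of_mem_outerProductHull {z : n → ℝ} {c : ℝ}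
    (h : ∀ p, |φ p ⬝ᵥ z| ≤ c) {N : Matrix n n ℝ} (hN : N ∈ outerProductHull φ) :
    z ⬝ᵥ N *ᵥ z ≤ c ^ 2 := by
  have hlin : IsLinearMap ℝ fun N : Matrix n n ℝ => z ⬝ᵥ N *ᵥ z :=
    ⟨fun A B => by simp [add_mulVec, dotProduct_add],
      fun c A => by simp [smul_mulVec, dotProduct_smul]⟩
  refine closedConvexHull_min ?_ (convex_halfSpace_le hlin _)
    (isClosed_le (continuous_const.dotProduct (continuous_id.matrix_mulVec continuous_const))
      continuous_const) hN
  rintro _ ⟨p, rfl⟩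
  rw [mem_ofPred_eq, dotProduct_vecMulVec_self_mulVec, ← sq_abs]
  exact pow_le_pow_left₀ (abs_nonneg _) (h p) 2

attribute [local instance] Matrix.normedAddCommGroup Matrix.normedSpace in
lemma isCompact_outerProductHull (hφ : Bornology.IsBounded (range φ)) :
    IsCompact (outerProductHull φ) := by
  have hS : Bornology.IsBounded (range fun p => vecMulVec (φ p) (φ p)) :=
    (hφ.isCompact_closure.image (continuous_id.matrix_vecMulVec continuous_id)).isBounded.subset
      (range_subset_iff.2 fun p => mem_image_of_mem _ (subset_closure (mem_range_self p)))
  rw [outerProductHull, closedConvexHull_eq_closure_convexHull]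
  exact (isBounded_convexHull.2 hS).isCompact_closure

lemma exists_posDef_mem_outerProductHull [Nonempty n]
    (hspan : Submodule.span ℝ (range φ) = ⊤) : ∃ M ∈ outerProductHull φ, M.PosDef := by
  obtain ⟨t, hts, -, ht, -⟩ := Submodule.exists_finset_span_eq_linearIndepOn ℝ (range φ)
  rw [hspan] at ht
  have hne : t.Nonempty := Finset.nonempty_iff_ne_empty.2 fun h => by simp [h] at ht
  refine ⟨t.centerMass (fun _ => 1) fun v => vecMulVec v v, convexHull_subset_closedConvexHull
    (t.centerMass_mem_convexHull (fun _ _ => zero_le_one) (by simpa using hne) fun v hv => ?_), ?_⟩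
  · obtain ⟨p, rfl⟩ := hts hv
    exact mem_range_self p
  · rw [Finset.centerMass]
    simpa using (posDef_sum_vecMulVec_self ht).smul (by positivity : (0 : ℝ) < (t.card : ℝ)⁻¹)

theorem exists_posDef_mem_outerProductHull_forall_le_card [Nonempty n] [DecidableEq n]
    (hφ : Bornology.IsBounded (range φ)) (hspan : Submodule.span ℝ (range φ) = ⊤) :
    ∃ M ∈ outerProductHull φ, M.PosDef ∧ ∀ p, φ p ⬝ᵥ M⁻¹ *ᵥ φ p ≤ Fintype.card n := by
  obtain ⟨M₀, hM₀, hM₀pd⟩ := exists_posDef_mem_outerProductHull hspan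
  obtain ⟨M, hM, hmax⟩ := (isCompact_outerProductHull hφ).exists_isMaxOn ⟨M₀, hM₀⟩
    continuous_id.matrix_det.continuousOn
  have hdet : 0 < M.det := hM₀pd.det_pos.trans_le (hmax hM₀)
  refine ⟨M, hM, (posSemidef_of_mem_outerProductHull hM).posDef_iff_det_ne_zero.2 hdet.ne',
    fun p => ?_⟩
  have := trace_inv_mul_le_card_of_isMaxOn_det convex_closedConvexHull hM hmax hdet
    (subset_closedConvexHull (mem_range_self p))
  rwa [mul_vecMulVec, trace_vecMulVec, dotProduct_comm] at this

end OuterProductHull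

open scoped MatrixOrder in
theorem exists_det_ne_zero_eNorm_mulVec_sq {d : ℕ} {M : Matrix (Fin d) (Fin d) ℝ} (hM : M.PosDef)
    {c : ℝ} (hc : c ≠ 0) :
    ∃ A : Matrix (Fin d) (Fin d) ℝ, A.det ≠ 0 ∧
      (∀ v, eNorm (A *ᵥ v) ^ 2 = c⁻¹ ^ 2 * (v ⬝ᵥ M⁻¹ *ᵥ v)) ∧
        ∀ v, eNorm (A⁻¹ *ᵥ v) ^ 2 = c ^ 2 * (v ⬝ᵥ M *ᵥ v) := by
  set R := CFC.sqrt M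
  have hR : R.det ≠ 0 := fun h => hM.det_pos.ne' <| by
    rw [← CFC.sqrt_mul_sqrt_self M hM.posSemidef.nonneg, det_mul, h, zero_mul]
  have hAinv : (c⁻¹ • R⁻¹)⁻¹ = c • R :=
    inv_eq_left_inv <| by
      rw [Matrix.smul_mul, Matrix.mul_smul, smul_smul, mul_inv_cancel₀ hc,
        mul_nonsing_inv _ hR.isUnit, one_smul]
  refine ⟨c⁻¹ • R⁻¹, ?_, fun v => ?_, fun v => ?_⟩
  · rw [det_smul]
    exact mul_ne_zero (pow_ne_zero _ (inv_ne_zero hc)) (isUnit_nonsing_inv_det R hR.isUnit).ne_zero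
  · rw [smul_mulVec, eNorm_smul, mul_pow, sq_abs, hM.posSemidef.inv_sqrt,
      eNorm_sqrt_mulVec_sq hM.inv.posSemidef]
  · rw [hAinv, smul_mulVec, eNorm_smul, mul_pow, sq_abs, eNorm_sqrt_mulVec_sq hM.posSemidef]

theorem stmt_6_general {X : Type*} (d : ℕ)
    (φ : X → Fin d → ℝ)
    (hbdd : ∃ C : ℝ, ∀ p, eNorm (φ p) ≤ C)
    (hspan : Submodule.span ℝ (Set.range φ) = ⊤) :
    ∃ A : Matrix (Fin d) (Fin d) ℝ, A.det ≠ 0 ∧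
      ∀ (f : X → ℝ) (z : Fin d → ℝ), (∀ p, f p = φ p ⬝ᵥ z) →
        (∀ p, eNorm (A *ᵥ φ p) ≤ 1) ∧
          eNorm (A⁻¹ *ᵥ z) ≤ (⨆ p, |f p|) * Real.sqrt d := by
  obtain rfl | hd := d.eq_zero_or_pos
  · exact ⟨1, by simp, fun _ _ _ => ⟨fun _ => by simp [eNorm], by simp [eNorm]⟩⟩
  obtain ⟨C, hC⟩ := hbdd
  have hφ : Bornology.IsBounded (range φ) :=
    isBounded_iff_forall_norm_le.2 ⟨C, forall_mem_range.2 fun p => (norm_le_eNorm _).trans (hC p)⟩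
  have : Nonempty (Fin d) := ⟨⟨0, hd⟩⟩
  obtain ⟨M, hMK, hM, hlev⟩ := exists_posDef_mem_outerProductHull_forall_le_card hφ hspan
  have hd' : (0 : ℝ) < d := by exact_mod_cast hd
  obtain ⟨A, hA, hAφ, hAz⟩ := exists_det_ne_zero_eNorm_mulVec_sq hM (Real.sqrt_pos.2 hd').ne'
  refine ⟨A, hA, fun f z hf => ⟨fun p => ?_, ?_⟩⟩
  · rw [← pow_le_one_iff_of_nonneg (eNorm_nonneg _) two_ne_zero, hAφ, inv_pow,
      Real.sq_sqrt hd'.le, inv_mul_le_one₀ hd']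
    simpa using hlev p
  · have hfb : BddAbove (range fun p => |f p|) :=
      ⟨C * eNorm z, forall_mem_range.2 fun p => hf p ▸
        (abs_dotProduct_le_eNorm_mul_eNorm _ _).trans
          (mul_le_mul_of_nonneg_right (hC p) (eNorm_nonneg z))⟩
    have hzMz : z ⬝ᵥ M *ᵥ z ≤ (⨆ p, |f p|) ^ 2 :=
      dotProduct_mulVec_le_sq_of_mem_outerProductHull (fun p => hf p ▸ le_ciSup hfb p) hMK
    rw [← pow_le_pow_iff_left₀ (eNorm_nonneg _)
      (mul_nonneg (Real.iSup_nonneg fun p => abs_nonneg _) (Real.sqrt_nonneg _)) two_ne_zero,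
      hAz, mul_pow, Real.sq_sqrt hd'.le, mul_comm]
    exact mul_le_mul_of_nonneg_right hzMz hd'.le

/-- Scaling lemma: for a bounded feature map `φ` whose image spans `ℝ^d`, there is an
invertible linear transformation `A` such that whenever a bounded function `f` satisfies
`f p = φ(p)ᵀ z`, one has `‖A φ(p)‖ ≤ 1` for all `p` and `‖A⁻¹ z‖ ≤ sup |f| ⋅ √d`. -/
theorem stmt_6 {X : Type*} [Nonempty X] (d : ℕ)
    (φ : X → Fin d → ℝ)
    (hbdd : ∃ C : ℝ, ∀ p, eNorm (φ p) ≤ C)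
    (hspan : Submodule.span ℝ (Set.range φ) = ⊤) :
    ∃ A : Matrix (Fin d) (Fin d) ℝ, A.det ≠ 0 ∧
      ∀ (f : X → ℝ) (z : Fin d → ℝ), (∀ p, f p = φ p ⬝ᵥ z) →
        (∀ p, eNorm (A *ᵥ φ p) ≤ 1) ∧
          eNorm (A⁻¹ *ᵥ z) ≤ (⨆ p, |f p|) * Real.sqrt d :=
  stmt_6_general d φ hbdd hspan
end

section
/- Under the same setup as the distributional-Eluder pigeon-hole lemma (sequences $\{\phi_k\} \subset \Phi$ with $|\phi| \leq C$ and $\{\mu_k\} \subset \Gamma$ with $\sum_{t=1}^{k-1}(\mathbb{E}_{\mu_t}[\phi_k])^2 \leq \beta$ for all $k \in [K]$, and $d = \mathrm{dim}_{DE}(\Phi,\Gamma,\epsilon)$), the squared version holds: $\sum_{t=1}^K (\mathbb{E}_{\mu_t}[\phi_t])^2 \leq d \beta \log K + \min\{K, d\} C^2 + K \epsilon^2$. -/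
/-!
Write `e t = |𝔼_{μ_t}[φ_t]|`. For a threshold `α ≥ ε` and any `L` with `β ≤ L α²`, colour the
indices with `e t ≥ α` greedily by `L` colours so that every index has squared correlation at most
`α²` with its predecessors of the same colour (pigeonhole on the budget `β`). Each colour class is
then an `α`-independent sequence, so at most `L d` indices have `e t ≥ α`. Consequently the
`(i+1)`-st largest value satisfies `e² ≤ ε² + β / ⌊i/d⌋` for `i ≥ d`, while the `d` largest are at
most `C`. Summing in blocks of `d` gives `d β H_n ≤ d β log (2n+1) ≤ d β log K` with
`n = ⌊(K-1)/d⌋`, which needs `d ≥ 2`; this holds as soon as some `e t ≥ ε`, because `(μ_t, μ_t)` is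
then an `e t`-independent sequence.
-/

open Finset MeasureTheory Real

-- The first term of the series `log ((1 + x) / (1 - x)) = 2 ∑ x^(2k+1) / (2k+1)` at `x = 1/(2n+2)`.
lemma one_div_succ_le_log_sub_log (n : ℕ) :
    1 / ((n : ℝ) + 1) ≤ log (2 * n + 3) - log (2 * n + 1) := by
  have ha : (0 : ℝ) < n + 1 / 2 := by positivity
  have hterm := le_hasSum (hasSum_log_one_add_inv ha) 0 fun k _ => by positivity
  have hratio : 1 + ((n : ℝ) + 1 / 2)⁻¹ = (2 * n + 3) / (2 * n + 1) := by field_simp; ring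
  rw [hratio, log_div (by positivity) (by positivity)] at hterm
  refine le_of_eq_of_le ?_ hterm
  rw [show (2 : ℝ) * (n + 1 / 2) + 1 = 2 * (n + 1) by ring]
  simp only [one_div, mul_inv_rev]
  ring

lemma sum_range_one_div_succ_le_log (n : ℕ) :
    ∑ m ∈ range n, 1 / ((m : ℝ) + 1) ≤ log (2 * n + 1) := by
  induction n with
  | zero => simp
  | succ n ih =>
    rw [sum_range_succ]
    have := one_div_succ_le_log_sub_log n
    have hcast : (2 : ℝ) * (n + 1 : ℕ) + 1 = 2 * n + 3 := by push_cast; ring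
    rw [hcast]
    linarith

lemma sum_range_mul_comp_div {M : Type*} [AddCommMonoid M] (f : ℕ → M) (d N : ℕ) :
    ∑ i ∈ range (d * N), f (i / d) = d • ∑ m ∈ range N, f m := by
  induction N with
  | zero => simp
  | succ N ih =>
    have hdiv : ∀ x ∈ range d, (d * N + x) / d = N := fun x hx => by
      rw [mem_range] at hx
      rw [Nat.mul_add_div (by omega), Nat.div_eq_of_lt hx, add_zero]
    rw [mul_add_one, sum_range_add, ih, sum_congr rfl fun x hx => congrArg f (hdiv x hx),
      sum_const, card_range, sum_range_succ, smul_add]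

-- The terms with `i < d` are `1 / 0 = 0`.
lemma sum_range_one_div_div_le_mul_log (d N : ℕ) (hd : 2 ≤ d) :
    ∑ i ∈ range N, 1 / ((i / d : ℕ) : ℝ) ≤ d * log N := by
  rcases Nat.eq_zero_or_pos N with rfl | hN
  · simp
  set n := (N - 1) / d
  have hNn : N ≤ d * (n + 1) := by
    have : N - 1 < n * d + d := Nat.lt_div_mul_add (by omega)
    rw [mul_add_one, mul_comm]
    omega
  have hn : 2 * n + 1 ≤ N := by
    have : n ≤ (N - 1) / 2 := Nat.div_le_div_left hd (by norm_num)
    omega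
  calc ∑ i ∈ range N, 1 / ((i / d : ℕ) : ℝ)
      ≤ ∑ i ∈ range (d * (n + 1)), 1 / ((i / d : ℕ) : ℝ) :=
        sum_le_sum_of_subset_of_nonneg (range_subset_range.mpr hNn) fun _ _ _ => by positivity
    _ = d * ∑ m ∈ range n, 1 / ((m : ℝ) + 1) := by
        rw [sum_range_mul_comp_div (fun m : ℕ => 1 / (m : ℝ)), sum_range_succ', nsmul_eq_mul]
        simp
    _ ≤ d * log (2 * n + 1) := by gcongr; exact sum_range_one_div_succ_le_log n
    _ ≤ d * log N := by gcongr; exact_mod_cast hn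

lemma exists_coloring_sum_le {ι : Type*} [LinearOrder ι] (w : ι → ι → ℝ) {a β : ℝ} {L : ℕ}
    (hL : 0 < L) (hβ : β ≤ L * a) (S : Finset ι)
    (hS : ∀ k ∈ S, ∑ s ∈ S with s < k, w k s ≤ β) :
    ∃ b : ι → Fin L, ∀ k ∈ S, ∑ s ∈ S with b s = b k ∧ s < k, w k s ≤ a := by
  induction S using Finset.induction_on_max with
  | empty => exact ⟨fun _ => ⟨0, hL⟩, by simp⟩
  | insert k S hlt ih =>
    obtain ⟨b, hb⟩ := ih fun j hj => by
      have := hS j (mem_insert_of_mem hj)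
      rwa [filter_insert, if_neg (not_lt.2 (hlt j hj).le)] at this
    have hk : ∑ s ∈ S, w k s ≤ (univ : Finset (Fin L)).card • a := by
      have := hS k (mem_insert_self k S)
      rw [filter_insert, if_neg (lt_irrefl k), filter_true_of_mem hlt] at this
      simpa using this.trans hβ
    have : Nonempty (Fin L) := ⟨⟨0, hL⟩⟩
    obtain ⟨l, -, hl⟩ := exists_sum_fiber_le_of_maps_to_of_sum_le_nsmul
      (fun s _ => mem_univ (b s)) univ_nonempty hk
    refine ⟨Function.update b k l, fun j hj => ?_⟩
    rcases mem_insert.1 hj with rfl | hjS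
    · refine le_of_eq_of_le (sum_congr ?_ fun _ _ => rfl) hl
      rw [filter_insert, if_neg (by simp)]
      refine filter_congr fun s hs => ?_
      simp [hlt s hs, Function.update_of_ne (hlt s hs).ne]
    · refine le_of_eq_of_le (sum_congr ?_ fun _ _ => rfl) (hb j hjS)
      rw [filter_insert, if_neg (by simp [(hlt j hjS).le])]
      refine filter_congr fun s hs => ?_
      simp [Function.update_of_ne (hlt s hs).ne, Function.update_of_ne (hlt j hjS).ne]

-- `c k s` stands for `𝔼_{μ_s}[φ_k]`; `T` is listed in increasing order.
def IsEluderChain {ι : Type*} [LinearOrder ι] (c : ι → ι → ℝ) (α : ℝ) (T : Finset ι) : Prop :=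
  ∀ k ∈ T, √(∑ s ∈ T with s < k, c k s ^ 2) ≤ α ∧ α ≤ |c k k|

lemma card_le_mul_of_sum_sq_le {ι : Type*} [LinearOrder ι] [Fintype ι] (c : ι → ι → ℝ)
    {α β : ℝ} {d L : ℕ} (hα : 0 ≤ α) (hL : 0 < L) (hβL : β ≤ L * α ^ 2)
    (hβ : ∀ k, ∑ s with s < k, c k s ^ 2 ≤ β) (hdim : ∀ T, IsEluderChain c α T → #T ≤ d) :
    #{k | α ≤ |c k k|} ≤ L * d := by
  set S : Finset ι := {k | α ≤ |c k k|}
  obtain ⟨b, hb⟩ := exists_coloring_sum_le (fun k s => c k s ^ 2) hL hβL S fun k _ =>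
    (sum_le_sum_of_subset_of_nonneg (filter_subset_filter _ (subset_univ S))
      fun _ _ _ => sq_nonneg _).trans (hβ k)
  have hclass : ∀ l, #{k ∈ S | b k = l} ≤ d := fun l => hdim _ fun k hk => by
    obtain ⟨hkS, rfl⟩ := mem_filter.1 hk
    refine ⟨?_, (mem_filter.1 hkS).2⟩
    rw [← sqrt_sq hα, filter_filter]
    exact sqrt_le_sqrt (hb k hkS)
  calc #S = ∑ l : Fin L, #{k ∈ S | b k = l} :=
        card_eq_sum_card_fiberwise fun k _ => mem_univ (b k)
    _ ≤ ∑ _l : Fin L, d := sum_le_sum fun l _ => hclass l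
    _ = L * d := by simp

lemma exists_perm_succ_le_card_le {α : Type*} [LinearOrder α] {K : ℕ} (e : Fin K → α) :
    ∃ σ : Equiv.Perm (Fin K), ∀ i : Fin K, (i : ℕ) + 1 ≤ #{t | e (σ i) ≤ e t} := by
  refine ⟨Fin.revPerm.trans (Tuple.sort e), fun i => ?_⟩
  calc (i : ℕ) + 1 = #(Ici (Fin.rev i)) := by rw [Fin.card_Ici, Fin.val_rev]; omega
    _ ≤ #{t | e (Tuple.sort e (Fin.rev i)) ≤ e t} := by
      refine card_le_card_of_injOn (Tuple.sort e) (fun j hj => ?_) (Tuple.sort e).injective.injOn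
      simp only [coe_Ici, Set.mem_Ici, coe_filter, mem_univ, true_and, Set.mem_ofPred_eq] at hj ⊢
      exact Tuple.monotone_sort e hj

lemma sq_le_add_div_of_lt_card {ι : Type*} [Fintype ι] (e : ι → ℝ) {β ε x : ℝ} {d i : ℕ}
    (hβ : 0 ≤ β) (hx : 0 ≤ x) (hd : 0 < d) (hdi : d ≤ i)
    (hcard : ∀ α, ε < α → 0 ≤ α → ∀ m : ℕ, 0 < m → β ≤ m * α ^ 2 → #{t | α ≤ e t} ≤ m * d)
    (hi : i < #{t | x ≤ e t}) :
    x ^ 2 ≤ ε ^ 2 + β / (i / d : ℕ) := by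
  have hm : 0 < i / d := Nat.div_pos hdi hd
  rcases le_or_gt x ε with hxε | hεx
  · have : x ^ 2 ≤ ε ^ 2 := pow_le_pow_left₀ hx hxε 2
    have : 0 ≤ β / (i / d : ℕ) := by positivity
    linarith
  rcases le_or_gt β ((i / d : ℕ) * x ^ 2) with hβx | hxβ
  · have := hcard x hεx hx (i / d) hm hβx
    have := Nat.div_mul_le_self i d
    omega
  · have : x ^ 2 < β / (i / d : ℕ) := by
      rw [lt_div_iff₀ (by exact_mod_cast hm)]
      linarith
    linarith [sq_nonneg ε]

lemma sum_sq_le_of_card_le {K : ℕ} (e : Fin K → ℝ) {C β ε : ℝ} {d : ℕ} (hd : 2 ≤ d)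
    (hβ : 0 ≤ β) (he0 : ∀ t, 0 ≤ e t) (heC : ∀ t, e t ≤ C)
    (hcard : ∀ α, ε < α → 0 ≤ α → ∀ m : ℕ, 0 < m → β ≤ m * α ^ 2 → #{t | α ≤ e t} ≤ m * d) :
    ∑ t, e t ^ 2 ≤ d * β * log K + (min K d : ℕ) * C ^ 2 + K * ε ^ 2 := by
  obtain ⟨σ, hσ⟩ := exists_perm_succ_le_card_le e
  -- for `i < d` the last summand is `β * (1 / 0) = 0`
  set b : ℕ → ℝ := fun i => (if i < d then C ^ 2 else 0) + ε ^ 2 + β * (1 / (i / d : ℕ))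
  have hb : ∀ i : Fin K, e (σ i) ^ 2 ≤ b i := by
    intro i
    have : 0 ≤ ε ^ 2 + β * (1 / (i / d : ℕ)) := by positivity
    by_cases hid : (i : ℕ) < d
    · have := pow_le_pow_left₀ (he0 (σ i)) (heC (σ i)) 2
      simp only [b, if_pos hid]
      linarith
    · simp only [b, if_neg hid, zero_add, mul_one_div]
      exact sq_le_add_div_of_lt_card e hβ (he0 _) (by omega) (by omega) hcard (hσ i)
  have hfilter : (range K).filter (· < d) = range (min K d) := by
    ext i
    simp only [mem_filter, mem_range, lt_min_iff]
  calc ∑ t, e t ^ 2 = ∑ i, e (σ i) ^ 2 := (Equiv.sum_comp σ _).symm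
    _ ≤ ∑ i : Fin K, b i := sum_le_sum fun i _ => hb i
    _ = ∑ i ∈ range K, b i := Fin.sum_univ_eq_sum_range b K
    _ = (min K d : ℕ) * C ^ 2 + K * ε ^ 2 + β * ∑ i ∈ range K, (1 : ℝ) / (i / d : ℕ) := by
      simp only [b, sum_add_distrib, ← mul_sum, sum_ite, hfilter, sum_const, card_range,
        nsmul_eq_mul, mul_zero, add_zero]
    _ ≤ (min K d : ℕ) * C ^ 2 + K * ε ^ 2 + β * (d * log K) := by
      gcongr
      exact sum_range_one_div_div_le_mul_log d K hd
    _ = d * β * log K + (min K d : ℕ) * C ^ 2 + K * ε ^ 2 := by ring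

section Measures

variable {X : Type*} [MeasurableSpace X]

def IsDEIndependent (Φ : Set (X → ℝ)) (ε' : ℝ) {n : ℕ} (ρ : Fin n → Measure X) : Prop :=
  ∀ i, ∃ φ ∈ Φ, √(∑ j with j < i, (∫ x, φ x ∂ρ j) ^ 2) ≤ ε' ∧ ε' ≤ |∫ x, φ x ∂ρ i|

def DEDimLE (Φ : Set (X → ℝ)) (Γ : Set (Measure X)) (ε : ℝ) (d : ℕ) : Prop :=
  ∀ (n : ℕ) (ρ : Fin n → Measure X), (∀ i, ρ i ∈ Γ) → (∃ ε' ≥ ε, IsDEIndependent Φ ε' ρ) → n ≤ d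

lemma sum_filter_lt_orderEmbOfFin {ι M : Type*} [LinearOrder ι] [AddCommMonoid M] (T : Finset ι)
    (f : ι → M) (i : Fin #T) :
    ∑ j with j < i, f (T.orderEmbOfFin rfl j) = ∑ s ∈ T with s < T.orderEmbOfFin rfl i, f s := by
  refine (sum_map _ (T.orderEmbOfFin rfl).toEmbedding f).symm.trans ?_
  congr 1
  ext s
  simp only [mem_map, mem_filter, mem_univ, true_and, RelEmbedding.coe_toEmbedding]
  constructor
  · rintro ⟨j, hj, rfl⟩
    exact ⟨T.orderEmbOfFin_mem rfl j, (OrderEmbedding.lt_iff_lt _).2 hj⟩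
  · rintro ⟨hs, hsi⟩
    obtain ⟨j, rfl⟩ : s ∈ Set.range (T.orderEmbOfFin rfl) := by
      rwa [range_orderEmbOfFin]
    exact ⟨j, (OrderEmbedding.lt_iff_lt _).1 hsi, rfl⟩

lemma card_le_of_isEluderChain {ι : Type*} [LinearOrder ι] {Φ : Set (X → ℝ)}
    {Γ : Set (Measure X)} {ε α : ℝ} {d : ℕ} (hdim : DEDimLE Φ Γ ε d) {φ : ι → X → ℝ}
    {μ : ι → Measure X} (hφ : ∀ k, φ k ∈ Φ) (hμ : ∀ k, μ k ∈ Γ) (hεα : ε ≤ α) {T : Finset ι}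
    (hT : IsEluderChain (fun k t => ∫ x, φ k x ∂μ t) α T) : #T ≤ d := by
  let emb := T.orderEmbOfFin rfl
  refine hdim _ (fun i => μ (emb i)) (fun i => hμ _) ⟨α, hεα, fun i => ⟨φ (emb i), hφ _, ?_⟩⟩
  rw [sum_filter_lt_orderEmbOfFin T (fun s => (∫ x, φ (emb i) x ∂μ s) ^ 2)]
  exact hT (emb i) (T.orderEmbOfFin_mem rfl i)

lemma two_le_of_le_abs_integral {Φ : Set (X → ℝ)} {Γ : Set (Measure X)} {ε : ℝ} {d : ℕ}
    (hdim : DEDimLE Φ Γ ε d) {φ : X → ℝ} {μ : Measure X} (hφ : φ ∈ Φ) (hμ : μ ∈ Γ)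
    (h : ε ≤ |∫ x, φ x ∂μ|) : 2 ≤ d := by
  refine hdim 2 (fun _ => μ) (fun _ => hμ) ⟨_, h, fun i => ⟨φ, hφ, ?_, le_rfl⟩⟩
  fin_cases i <;> simp [filter_eq', sqrt_sq_eq_abs]

end Measures

/-- Pigeon-hole principle for the distributional Eluder dimension (absolute-value
version, squared form): if every sequence of measures in `Γ` that is `ε'`-independent (for some
`ε' ≥ ε`) w.r.t. `Φ` has length at most `d`, and
`∑_{t<k} (E_{μ_t}[φ_k])² ≤ β` for all `k ∈ [K]`, then
`∑_{t} |E_{μ_t}[φ_t]| ≤ 2√(dβK) + min{K,d} C + Kε`. -/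
theorem stmt_12 {X : Type*} [MeasurableSpace X]
    (Φ : Set (X → ℝ)) (Γ : Set (Measure X)) (C β ε : ℝ) (d K : ℕ)
    (hC : ∀ φ ∈ Φ, ∀ x, |φ x| ≤ C)
    (hΓ : ∀ μ ∈ Γ, IsProbabilityMeasure μ)
    (hdim : ∀ (n : ℕ) (ρ : Fin n → Measure X), (∀ i, ρ i ∈ Γ) →
      (∃ ε' ≥ ε, ∀ i : Fin n, ∃ φ ∈ Φ,
        Real.sqrt (∑ j ∈ Finset.univ.filter (fun j => j < i), (∫ x, φ x ∂(ρ j)) ^ 2) ≤ ε' ∧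
          ε' ≤ |∫ x, φ x ∂(ρ i)|) → n ≤ d)
    (φseq : Fin K → X → ℝ) (μseq : Fin K → Measure X)
    (hφ : ∀ k, φseq k ∈ Φ) (hμ : ∀ k, μseq k ∈ Γ)
    (hβ : ∀ k : Fin K,
      ∑ t ∈ Finset.univ.filter (fun t => t < k), (∫ x, φseq k x ∂(μseq t)) ^ 2 ≤ β) :
    ∑ t : Fin K, (∫ x, φseq t x ∂(μseq t)) ^ 2 ≤
      d * β * Real.log K + (min K d : ℕ) * C ^ 2 + K * ε ^ 2 := by
  rcases Nat.eq_zero_or_pos K with rfl | hK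
  · simp
  set c : Fin K → Fin K → ℝ := fun k t => ∫ x, φseq k x ∂μseq t
  have hβ0 : 0 ≤ β := by simpa [Fin.lt_def] using hβ ⟨0, hK⟩
  have hcC : ∀ t, |c t t| ≤ C := fun t => by
    have := hΓ _ (hμ t)
    simpa using norm_integral_le_of_norm_le_const (μ := μseq t) (ae_of_all _ fun x =>
      (Real.norm_eq_abs _).trans_le (hC _ (hφ t) x))
  simp_rw [← sq_abs (∫ x, φseq _ x ∂μseq _)]
  by_cases hsmall : ∀ t, |c t t| < ε
  · calc ∑ t, |c t t| ^ 2 ≤ ∑ _t : Fin K, ε ^ 2 :=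
          sum_le_sum fun t _ => pow_le_pow_left₀ (abs_nonneg _) (hsmall t).le 2
      _ = K * ε ^ 2 := by simp
      _ ≤ _ := le_add_of_nonneg_left (by positivity)
  obtain ⟨t, ht⟩ : ∃ t, ε ≤ |c t t| := by simpa using hsmall
  have hd := two_le_of_le_abs_integral hdim (hφ t) (hμ t) ht
  exact sum_sq_le_of_card_le (fun t => |c t t|) hd hβ0 (fun t => abs_nonneg _) hcC
    fun α hεα hα m hm hβm => card_le_mul_of_sum_sq_le c hα hm hβm hβ fun T hT =>
      card_le_of_isEluderChain hdim hφ hμ hεα.le hT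
end

section
/- Let real numbers $\epsilon_{1},\dots,\epsilon_{K} \geq 0$ be assigned to buckets $B_1, \dots, B_{K-1}$ (with possibly some indices unassigned, collected in $B_0$), with $|B_j| \leq d$ for all $j \geq 1$. Then $\sum_{j=1}^{K-1} \frac{j}{|B_j|}\left(\sum_{t \in B_j} \epsilon_t\right)^2 \geq \frac{1}{d(1+\log K)}\left(\sum_{t \in [K] \setminus B_0} \epsilon_t\right)^2$, provided every $B_j$ with $j \geq 1$ appearing in the sum is nonempty. -/
/-!
Split the buckets' total as `∑_{j ≥ 1} S_j` with `S_j = ∑_{t ∈ B_j} ε_t`. Cauchy–Schwarz with the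
factorization `S_j² ≤ (d / j) · ((j / |B_j|) S_j²)`, valid because `|B_j| ≤ d`, gives
`(∑ S_j)² ≤ d (∑_{1 ≤ j < K} 1/j) ∑ (j / |B_j|) S_j²`, and the harmonic sum is at most `1 + log K`.
-/

open Finset

lemma sum_Ico_one_inv_le_one_add_log (n : ℕ) :
    ∑ j ∈ Ico 1 n, ((j : ℝ))⁻¹ ≤ 1 + Real.log n :=
  calc ∑ j ∈ Ico 1 n, ((j : ℝ))⁻¹ ≤ ∑ j ∈ Icc 1 n, ((j : ℝ))⁻¹ :=
        sum_le_sum_of_subset_of_nonneg Ico_subset_Icc_self fun _ _ _ => by positivity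
    _ = harmonic n := by simp [harmonic_eq_sum_Icc]
    _ ≤ 1 + Real.log n := harmonic_le_one_add_log n

lemma sdiff_eq_biUnion_Ico_of_partition {α : Type*} [Fintype α] [DecidableEq α] {K : ℕ}
    {B : ℕ → Finset α} (hdisj : ∀ j₁ j₂, j₁ < K → j₂ < K → j₁ ≠ j₂ → Disjoint (B j₁) (B j₂))
    (hcover : ∀ i, ∃ j < K, i ∈ B j) :
    univ \ B 0 = (Ico 1 K).biUnion B := by
  ext i
  simp only [mem_sdiff, mem_univ, true_and, mem_biUnion, mem_Ico]
  constructor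
  · intro hi
    obtain ⟨j, hjK, hij⟩ := hcover i
    exact ⟨j, ⟨Nat.one_le_iff_ne_zero.mpr (by rintro rfl; exact hi hij), hjK⟩, hij⟩
  · rintro ⟨j, ⟨hj, hjK⟩, hij⟩ hi₀
    exact disjoint_left.mp (hdisj 0 j (by omega) hjK (by omega)) hi₀ hij

lemma sq_sum_le_of_card_le {α : Type*} {s : Finset α} {d : ℕ} (hs : #s ≤ d) (f : α → ℝ)
    {j : ℝ} (hj : 0 < j) :
    (∑ t ∈ s, f t) ^ 2 ≤ d / j * (j / #s * (∑ t ∈ s, f t) ^ 2) := by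
  rcases s.eq_empty_or_nonempty with rfl | hne
  · simp
  have hcard : (0 : ℝ) < #s := by exact_mod_cast hne.card_pos
  have hsd : (#s : ℝ) ≤ d := by exact_mod_cast hs
  calc (∑ t ∈ s, f t) ^ 2 ≤ d / #s * (∑ t ∈ s, f t) ^ 2 :=
        le_mul_of_one_le_left (sq_nonneg _) ((one_le_div hcard).mpr hsd)
    _ = d / j * (j / #s * (∑ t ∈ s, f t) ^ 2) := by field_simp

theorem stmt_14_general (K d : ℕ)
    (ε : Fin K → ℝ)
    (B : ℕ → Finset (Fin K))
    (hdisj : ∀ j₁ j₂, j₁ < K → j₂ < K → j₁ ≠ j₂ → Disjoint (B j₁) (B j₂))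
    (hcover : ∀ i : Fin K, ∃ j < K, i ∈ B j)
    (hcard : ∀ j, 1 ≤ j → j < K → (B j).card ≤ d) :
    (1 / (d * (1 + Real.log K))) * (∑ t ∈ Finset.univ \ B 0, ε t) ^ 2 ≤
      ∑ j ∈ Finset.Ico 1 K, ((j : ℝ) / (B j).card) * (∑ t ∈ B j, ε t) ^ 2 := by
  set R := ∑ j ∈ Ico 1 K, ((j : ℝ) / #(B j)) * (∑ t ∈ B j, ε t) ^ 2
  have hR : 0 ≤ R := sum_nonneg fun _ _ => by positivity
  have hsplit : ∑ t ∈ univ \ B 0, ε t = ∑ j ∈ Ico 1 K, ∑ t ∈ B j, ε t := by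
    rw [sdiff_eq_biUnion_Ico_of_partition hdisj hcover, sum_biUnion]
    intro a ha b hb hab
    exact hdisj a b (mem_Ico.mp ha).2 (mem_Ico.mp hb).2 hab
  have hcs : (∑ t ∈ univ \ B 0, ε t) ^ 2 ≤ (∑ j ∈ Ico 1 K, (d : ℝ) / j) * R := by
    rw [hsplit]
    refine sum_sq_le_sum_mul_sum_of_sq_le_mul _ (fun _ _ => by positivity)
      (fun _ _ => by positivity) fun j hj => ?_
    obtain ⟨hj₁, hjK⟩ := mem_Ico.mp hj
    exact sq_sum_le_of_card_le (hcard j hj₁ hjK) ε (by exact_mod_cast hj₁)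
  have hharm : ∑ j ∈ Ico 1 K, (d : ℝ) / j ≤ d * (1 + Real.log K) := by
    simp only [div_eq_mul_inv, ← mul_sum]
    exact mul_le_mul_of_nonneg_left (sum_Ico_one_inv_le_one_add_log K) d.cast_nonneg
  rw [one_div_mul_eq_div]
  refine div_le_of_le_mul₀ (by positivity) hR ?_
  calc _ ≤ (∑ j ∈ Ico 1 K, (d : ℝ) / j) * R := hcs
    _ ≤ d * (1 + Real.log K) * R := mul_le_mul_of_nonneg_right hharm hR
    _ = R * (d * (1 + Real.log K)) := mul_comm _ _

/-- Bucket inequality from the proof of the GEC-style bound: if `B_0, …, B_{K-1}`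
partition `[K]`, every bucket `B_j` with `j ≥ 1` has at most `d` elements and is
nonempty, and `ε_t ≥ 0`, then
`∑_{j=1}^{K-1} (j/|B_j|) (∑_{t ∈ B_j} ε_t)² ≥ (∑_{t ∈ [K]∖B_0} ε_t)² / (d(1+log K))`. -/
theorem stmt_14 (K d : ℕ) (hK : 1 ≤ K) (hd : 1 ≤ d)
    (ε : Fin K → ℝ) (hε : ∀ t, 0 ≤ ε t)
    (B : ℕ → Finset (Fin K))
    (hdisj : ∀ j₁ j₂, j₁ < K → j₂ < K → j₁ ≠ j₂ → Disjoint (B j₁) (B j₂))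
    (hcover : ∀ i : Fin K, ∃ j < K, i ∈ B j)
    (hcard : ∀ j, 1 ≤ j → j < K → (B j).card ≤ d)
    (hne : ∀ j, 1 ≤ j → j < K → (B j).Nonempty) :
    (1 / (d * (1 + Real.log K))) * (∑ t ∈ Finset.univ \ B 0, ε t) ^ 2 ≤
      ∑ j ∈ Finset.Ico 1 K, ((j : ℝ) / (B j).card) * (∑ t ∈ B j, ε t) ^ 2 :=
  stmt_14_general K d ε B hdisj hcover hcard
end

section
/- Let $K$ be a real Hilbert space, let $X_1,\dots,X_m \in K$ with $\|X_t\| \leq 1$, let $W_1,\dots,W_m \in K$ with $\|W_t\| \leq 2R'$ for some $R' > 0$. Suppose for some $\epsilon' > 0$ and all $t \in [m]$: $\sum_{i=1}^{t-1} \langle X_i, W_t\rangle^2 \leq \epsilon'^2$ and $|\langle X_t, W_t \rangle| > \epsilon'$. Define $\Sigma_t = \sum_{i=1}^{t-1} X_i X_i^\top + \frac{\epsilon'^2}{4R'^2} I$ (as an operator on $K$). Then $\|W_t\|_{\Sigma_t} \leq \sqrt{2}\epsilon'$ and $\|X_t\|_{\Sigma_t^{-1}}^2 \geq 1/2$ for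 all $t \in [m]$. -/
/-!
On `W_t` the quadratic form of `Σ_t` is at most `2ε'²`: the rank-one part contributes
`∑_{i<t} ⟪X_i, W_t⟫² ≤ ε'²`, and the regularizer `ε'²/(4R'²)` was chosen so that it contributes at
most `ε'²` on the ball of radius `2R'`. Cauchy–Schwarz for the positive operator `Σ_t`, applied to
`Σ_t⁻¹ X_t` and `W_t`, then gives `ε'² < ⟪X_t, W_t⟫² ≤ ⟪X_t, Σ_t⁻¹ X_t⟫ · 2ε'²`.
-/

open scoped RealInnerProductSpace

open InnerProductSpace

namespace ContinuousLinearMap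

variable {E : Type*} [NormedAddCommGroup E] [InnerProductSpace ℝ E]

theorem IsPositive.real_inner_map_sq_le {T : E →L[ℝ] E} (hT : T.IsPositive) (u v : E) :
    ⟪u, T v⟫ ^ 2 ≤ ⟪u, T u⟫ * ⟪v, T v⟫ := by
  have hsymm : ⟪v, T u⟫ = ⟪u, T v⟫ := by
    rw [← hT.inner_left_eq_inner_right, real_inner_comm]
  have hquad : ∀ x : ℝ, 0 ≤ ⟪v, T v⟫ * (x * x) + 2 * ⟪u, T v⟫ * x + ⟪u, T u⟫ := fun x => by
    have h := hT.inner_nonneg_right (u + x • v)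
    simp only [map_add, map_smul, inner_add_left, inner_add_right, real_inner_smul_left,
      real_inner_smul_right, hsymm] at h
    linarith
  have hdiscrim := discrim_le_zero hquad
  rw [discrim] at hdiscrim
  linarith

theorem IsPositive.real_inner_sq_le_of_rightInverse {T Tinv : E →L[ℝ] E} (hT : T.IsPositive)
    (hinv : T.comp Tinv = ContinuousLinearMap.id ℝ E) (x w : E) :
    ⟪x, w⟫ ^ 2 ≤ ⟪x, Tinv x⟫ * ⟪w, T w⟫ := by
  have hx : T (Tinv x) = x := by simpa using congrArg (fun f : E →L[ℝ] E => f x) hinv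
  have h := hT.real_inner_map_sq_le (Tinv x) w
  rwa [← hT.inner_left_eq_inner_right, hx, real_inner_comm x] at h

variable {ι : Type*} (s : Finset ι) (x : ι → E) (c : ℝ)

theorem isPositive_sum_rankOne_add_smul_id (hc : 0 ≤ c) :
    (∑ i ∈ s, rankOne ℝ (x i) (x i) + c • ContinuousLinearMap.id ℝ E).IsPositive :=
  (isPositive_sum s fun i _ => isPositive_rankOne_self (x i)).add
    (isPositive_id.smul_of_nonneg hc)

theorem real_inner_sum_rankOne_add_smul_id_apply_self (v : E) :
    ⟪v, (∑ i ∈ s, rankOne ℝ (x i) (x i) + c • ContinuousLinearMap.id ℝ E) v⟫ =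
      ∑ i ∈ s, ⟪x i, v⟫ ^ 2 + c * ‖v‖ ^ 2 := by
  simp only [add_apply, sum_apply, rankOne_apply, smul_apply, id_apply, inner_add_right,
    inner_sum, real_inner_smul_right, real_inner_self_eq_norm_sq, real_inner_comm v, sq]

end ContinuousLinearMap

open ContinuousLinearMap

theorem real_inner_sum_rankOne_add_regularization_le {E ι : Type*} [NormedAddCommGroup E]
    [InnerProductSpace ℝ E] (s : Finset ι) (x : ι → E) {R ε : ℝ} (hR : 0 < R) {w : E}
    (hw : ‖w‖ ≤ 2 * R) (hsmall : ∑ i ∈ s, ⟪x i, w⟫ ^ 2 ≤ ε ^ 2) :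
    ⟪w, (∑ i ∈ s, rankOne ℝ (x i) (x i) +
      (ε ^ 2 / (4 * R ^ 2)) • ContinuousLinearMap.id ℝ E) w⟫ ≤ 2 * ε ^ 2 := by
  have hreg : ε ^ 2 / (4 * R ^ 2) * ‖w‖ ^ 2 ≤ ε ^ 2 :=
    calc ε ^ 2 / (4 * R ^ 2) * ‖w‖ ^ 2 ≤ ε ^ 2 / (4 * R ^ 2) * (2 * R) ^ 2 := by
          gcongr
      _ = ε ^ 2 := by field_simp; ring
  rw [real_inner_sum_rankOne_add_smul_id_apply_self]
  linarith

theorem stmt_15_general {K : Type*} [NormedAddCommGroup K] [InnerProductSpace ℝ K]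
    (m : ℕ) (R' ε' : ℝ) (hR : 0 < R') (hε : 0 < ε')
    (X W : Fin m → K)
    (hW : ∀ t, ‖W t‖ ≤ 2 * R')
    (hsmall : ∀ t : Fin m,
      ∑ i ∈ Finset.univ.filter (fun i => i < t), ⟪X i, W t⟫ ^ 2 ≤ ε' ^ 2)
    (hbig : ∀ t : Fin m, ε' < |⟪X t, W t⟫|)
    (S Sinv : Fin m → K →L[ℝ] K)
    (hS : ∀ t : Fin m, S t =
      (∑ i ∈ Finset.univ.filter (fun i => i < t),
        (innerSL ℝ (X i)).smulRight (X i)) +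
        (ε' ^ 2 / (4 * R' ^ 2)) • ContinuousLinearMap.id ℝ K)
    (hSinv : ∀ t, (Sinv t).comp (S t) = ContinuousLinearMap.id ℝ K ∧
      (S t).comp (Sinv t) = ContinuousLinearMap.id ℝ K) :
    ∀ t : Fin m,
      Real.sqrt ⟪W t, S t (W t)⟫ ≤ Real.sqrt 2 * ε' ∧
        (1 : ℝ) / 2 ≤ ⟪X t, Sinv t (X t)⟫ := by
  intro t
  simp_rw [← rankOne_def] at hS
  have hpos : (S t).IsPositive := hS t ▸ isPositive_sum_rankOne_add_smul_id _ _ _ (by positivity)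
  have hWS : ⟪W t, S t (W t)⟫ ≤ 2 * ε' ^ 2 :=
    hS t ▸ real_inner_sum_rankOne_add_regularization_le _ _ hR (hW t) (hsmall t)
  refine ⟨?_, ?_⟩
  · calc Real.sqrt ⟪W t, S t (W t)⟫ ≤ Real.sqrt (2 * ε' ^ 2) := Real.sqrt_le_sqrt hWS
      _ = Real.sqrt 2 * ε' := by rw [Real.sqrt_mul zero_le_two, Real.sqrt_sq hε.le]
  · have hcs := hpos.real_inner_sq_le_of_rightInverse (hSinv t).2 (X t) (W t)
    have hbig_sq : ε' ^ 2 < ⟪X t, W t⟫ ^ 2 := by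
      simpa only [sq_abs] using pow_lt_pow_left₀ (hbig t) hε.le two_ne_zero
    nlinarith [hpos.inner_nonneg_right (W t)]

/-- Kernel elliptical argument: in a real Hilbert space, if `‖X_t‖ ≤ 1`,
`‖W_t‖ ≤ 2R'`, `∑_{i<t} ⟨X_i, W_t⟩² ≤ ε'²` and `|⟨X_t, W_t⟩| > ε'`, then with
`Σ_t = ∑_{i<t} X_i X_iᵀ + (ε'²/4R'²) I` one has `‖W_t‖_{Σ_t} ≤ √2 ε'` and
`‖X_t‖_{Σ_t⁻¹}² ≥ 1/2`. -/
theorem stmt_15 {K : Type*} [NormedAddCommGroup K] [InnerProductSpace ℝ K]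
    [CompleteSpace K] (m : ℕ) (R' ε' : ℝ) (hR : 0 < R') (hε : 0 < ε')
    (X W : Fin m → K)
    (hX : ∀ t, ‖X t‖ ≤ 1) (hW : ∀ t, ‖W t‖ ≤ 2 * R')
    (hsmall : ∀ t : Fin m,
      ∑ i ∈ Finset.univ.filter (fun i => i < t), ⟪X i, W t⟫ ^ 2 ≤ ε' ^ 2)
    (hbig : ∀ t : Fin m, ε' < |⟪X t, W t⟫|)
    (S Sinv : Fin m → K →L[ℝ] K)
    (hS : ∀ t : Fin m, S t =
      (∑ i ∈ Finset.univ.filter (fun i => i < t),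
        (innerSL ℝ (X i)).smulRight (X i)) +
        (ε' ^ 2 / (4 * R' ^ 2)) • ContinuousLinearMap.id ℝ K)
    (hSinv : ∀ t, (Sinv t).comp (S t) = ContinuousLinearMap.id ℝ K ∧
      (S t).comp (Sinv t) = ContinuousLinearMap.id ℝ K) :
    ∀ t : Fin m,
      Real.sqrt ⟪W t, S t (W t)⟫ ≤ Real.sqrt 2 * ε' ∧
        (1 : ℝ) / 2 ≤ ⟪X t, Sinv t (X t)⟫ :=
  stmt_15_general m R' ε' hR hε X W hW hsmall hbig S Sinv hS hSinv
end
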